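/- Let (V,β,ρ,μ) be a representation of a Hom-pre-Lie algebra (A,·,α) on a finite-dimensional vector space V with β invertible, and let ρ⋆, μ⋆ : A → gl(V*) be given by ⟨ρ⋆(x)(ξ), u⟩ = −⟨ξ, β^{-2}(ρ(α(x))(u))⟩ and ⟨μ⋆(x)(ξ), u⟩ = −⟨ξ, β^{-2}(μ(α(x))(u))⟩. Then applying the same dual-representation construction to (V*, (β^{-1})*, ρ⋆ − μ⋆, −μ⋆) and identifying (V*)* with V canonically, one recovers (V, β, ρ, μ): that is, ((ρ⋆−μ⋆)⋆ − (−μ⋆)⋆, −(−μ⋆)⋆) = (ρ, μ) and (((β^{-1})*)^{-1})* = β under the canonical identification. -/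

import Mathlib

/-- A Hom-pre-Lie algebra structure on `A`: a bilinear product and an algebra
morphism `α` satisfying the Hom-pre-Lie identity. -/
def IsHomPreLie {K A : Type*} [Field K] [AddCommGroup A] [Module K A]
    (mul : A →ₗ[K] A →ₗ[K] A) (α : A →ₗ[K] A) : Prop :=
  (∀ x y, α (mul x y) = mul (α x) (α y)) ∧
  (∀ x y z, mul (mul x y) (α z) - mul (α x) (mul y z)
      = mul (mul y x) (α z) - mul (α y) (mul x z))

/-- A representation of a Hom-Lie algebra `(L, bracket, α)` on `V` with respect to `β`. -/
def IsHomLieRep {K L V : Type*} [Field K] [AddCommGroup L] [Module K L]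
    [AddCommGroup V] [Module K V]
    (bracket : L →ₗ[K] L →ₗ[K] L) (α : L →ₗ[K] L)
    (β : V →ₗ[K] V) (ρ : L →ₗ[K] Module.End K V) : Prop :=
  (∀ x, ρ (α x) ∘ₗ β = β ∘ₗ ρ x) ∧
  (∀ x y, ρ (bracket x y) ∘ₗ β = ρ (α x) ∘ₗ ρ y - ρ (α y) ∘ₗ ρ x)

/-- A representation `(V, β, ρ, μ)` of a Hom-pre-Lie algebra `(A, mul, α)`:
`ρ` is a representation of the sub-adjacent Hom-Lie algebra (whose bracket is the
commutator `mul - mul.flip`) with respect to `β`, together with the two compatibility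
conditions for `μ`. -/
def IsHomPreLieRep {K A V : Type*} [Field K] [AddCommGroup A] [Module K A]
    [AddCommGroup V] [Module K V]
    (mul : A →ₗ[K] A →ₗ[K] A) (α : A →ₗ[K] A)
    (β : V →ₗ[K] V) (ρ μ : A →ₗ[K] Module.End K V) : Prop :=
  IsHomLieRep (mul - mul.flip) α β ρ ∧
  (∀ x, β ∘ₗ μ x = μ (α x) ∘ₗ β) ∧
  (∀ x y, μ (α y) ∘ₗ μ x - μ (mul x y) ∘ₗ β = μ (α y) ∘ₗ ρ x - ρ (α x) ∘ₗ μ y)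

/-- The twisted dual map `ρ⋆ : A → gl(V*)`, defined by
`⟨ρ⋆(x)(ξ), u⟩ = −⟨ξ, β⁻²(ρ(α(x))(u))⟩`. -/
noncomputable def starRep {K A V : Type*} [Field K] [AddCommGroup A] [Module K A]
    [AddCommGroup V] [Module K V]
    (α : A →ₗ[K] A) (β : V ≃ₗ[K] V) (ρ : A →ₗ[K] Module.End K V) :
    A →ₗ[K] Module.End K (V →ₗ[K] K) where
  toFun x := - (((β.symm.toLinearMap ∘ₗ β.symm.toLinearMap) ∘ₗ ρ (α x)).dualMap :
      Module.End K (Module.Dual K V))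
  map_add' x y := by
    ext ξ u
    simp [LinearMap.dualMap_apply]
    abel
  map_smul' c x := by
    ext ξ u
    simp [LinearMap.dualMap_apply]

/-- Port note: current instance search no longer finds Mathlib's `LinearMap.addCommGroup`
on `A →ₗ[K] Module.End K (V →ₗ[K] K)`; supply exactly that instance. -/
instance addCommGroupLinearMapEndDual {K A V : Type*} [Field K] [AddCommGroup A] [Module K A]
    [AddCommGroup V] [Module K V] :
    AddCommGroup (A →ₗ[K] Module.End K (V →ₗ[K] K)) :=
  @LinearMap.addCommGroup K K A (Module.End K (V →ₗ[K] K)) _ _ _ inferInstance _ _ (RingHom.id K)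

/-- Port note: the same for the double dual `(V →ₗ[K] K) →ₗ[K] K`. -/
instance addCommGroupLinearMapEndDoubleDual {K A V : Type*} [Field K] [AddCommGroup A]
    [Module K A] [AddCommGroup V] [Module K V] :
    AddCommGroup (A →ₗ[K] Module.End K ((V →ₗ[K] K) →ₗ[K] K)) :=
  @LinearMap.addCommGroup K K A (Module.End K ((V →ₗ[K] K) →ₗ[K] K)) _ _ _ inferInstance _ _
    (RingHom.id K)

/-!
The twisted dual `ρ ↦ ρ⋆` is additive in `ρ`, so the double dual of `(ρ⋆ − μ⋆, −μ⋆)` collapses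
to `(ρ⋆⋆, μ⋆⋆)`, the two signs of `⋆` cancelling. Under `V ≅ V**`, `ρ⋆⋆(x)` is `ρ(α²x)`
conjugated by `β²`, which is `ρ(x)` again because `ρ(α x) ∘ β = β ∘ ρ(x)`; likewise for `μ`.
-/

section StarRep

variable {K A V : Type*} [Field K] [AddCommGroup A] [Module K A] [AddCommGroup V] [Module K V]
  (α : A →ₗ[K] A) (β : V ≃ₗ[K] V)

theorem starRep_sub (ρ μ : A →ₗ[K] Module.End K V) :
    starRep α β (ρ - μ) = starRep α β ρ - starRep α β μ := by
  ext x ξ u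
  -- `LinearMap.sub_apply` does not see through the instance `addCommGroupLinearMapEndDual`
  change _ = starRep α β ρ x ξ u - starRep α β μ x ξ u
  simp only [starRep, LinearEquiv.comp_coe, LinearMap.sub_apply, LinearMap.coe_mk, AddHom.coe_mk,
    LinearMap.neg_apply, LinearMap.dualMap_apply, LinearMap.coe_comp, LinearEquiv.coe_coe,
    Function.comp_apply, LinearEquiv.trans_apply, map_sub, neg_sub, sub_neg_eq_add]
  abel

theorem starRep_neg (μ : A →ₗ[K] Module.End K V) :
    starRep α β (-μ) = -starRep α β μ := by
  ext x ξ u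
  change _ = -starRep α β μ x ξ u
  simp [starRep, LinearMap.dualMap_apply]

theorem starRep_starRep_eval {ρ : A →ₗ[K] Module.End K V}
    (hρ : ∀ x, ρ (α x) ∘ₗ β = β ∘ₗ ρ x) (x : A) (v : V) :
    starRep α β.symm.dualMap (starRep α β ρ) x (Module.Dual.eval K V v)
      = Module.Dual.eval K V (ρ x v) := by
  have hρ_apply : ∀ x v, ρ (α x) (β v) = β (ρ x v) := fun x v => LinearMap.congr_fun (hρ x) v
  ext ξ
  simp [starRep, LinearMap.dualMap_apply, hρ_apply]

end StarRep

theorem double_dual_rep_eq_general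
    {K A V : Type*} [Field K] [AddCommGroup A] [Module K A]
    [AddCommGroup V] [Module K V] [FiniteDimensional K V]
    (mul : A →ₗ[K] A →ₗ[K] A) (α : A ≃ₗ[K] A)
    (β : V ≃ₗ[K] V) (ρ μ : A →ₗ[K] Module.End K V)
    (hrep : IsHomPreLieRep mul (α : A →ₗ[K] A) (β : V →ₗ[K] V) ρ μ) :
    -- the dual representation `(V*, (β⁻¹)*, ρ' = ρ⋆ − μ⋆, μ' = −μ⋆)`
    ∀ (ρ' μ' : A →ₗ[K] Module.End K (V →ₗ[K] K)) (β' : (V →ₗ[K] K) ≃ₗ[K] (V →ₗ[K] K)),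
      ρ' = starRep (α : A →ₗ[K] A) β ρ - starRep (α : A →ₗ[K] A) β μ →
      μ' = - starRep (α : A →ₗ[K] A) β μ →
      β' = β.symm.dualMap →
      -- its dual representation, transported along the canonical evaluation
      -- isomorphism `V ≃ (V*)*`, is the original representation `(V, β, ρ, μ)`:
      (∀ (x : A) (v : V),
          (starRep (α : A →ₗ[K] A) β' ρ' - starRep (α : A →ₗ[K] A) β' μ') x
              (Module.evalEquiv K V v)
            = Module.evalEquiv K V (ρ x v)) ∧
      (∀ (x : A) (v : V),
          (- starRep (α : A →ₗ[K] A) β' μ') x (Module.evalEquiv K V v)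
            = Module.evalEquiv K V (μ x v)) ∧
      (∀ v : V, β'.symm.dualMap (Module.evalEquiv K V v)
            = Module.evalEquiv K V (β v)) := by
  rintro ρ' μ' β' rfl rfl rfl
  have hρ := starRep_starRep_eval (α : A →ₗ[K] A) β hrep.1.1
  have hμ := starRep_starRep_eval (α : A →ₗ[K] A) β fun x => (hrep.2.1 x).symm
  -- `((β⁻¹)*)⁻¹ = β*` and `β** ∘ eval = eval ∘ β` hold definitionally
  refine ⟨fun x v => ?_, fun x v => ?_, fun v => rfl⟩
  · rw [starRep_sub, starRep_neg, sub_neg_eq_add, sub_add_cancel]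
    exact hρ x v
  · rw [starRep_neg, neg_neg]
    exact hμ x v

/-- Let `(V,β,ρ,μ)` be a representation of a Hom-pre-Lie algebra
`(A,·,α)` on a finite-dimensional space `V`, with `β` invertible.  Applying the
dual-representation construction twice and identifying `(V*)*` with `V` via the
canonical evaluation isomorphism recovers `(V, β, ρ, μ)`:
`((ρ⋆−μ⋆)⋆ − (−μ⋆)⋆, −(−μ⋆)⋆) = (ρ, μ)` and `(((β⁻¹)*)⁻¹)* = β`. -/
theorem double_dual_rep_eq
    {K A V : Type*} [Field K] [AddCommGroup A] [Module K A]
    [AddCommGroup V] [Module K V] [FiniteDimensional K V]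
    (mul : A →ₗ[K] A →ₗ[K] A) (α : A ≃ₗ[K] A)
    (hA : IsHomPreLie mul (α : A →ₗ[K] A))
    (β : V ≃ₗ[K] V) (ρ μ : A →ₗ[K] Module.End K V)
    (hrep : IsHomPreLieRep mul (α : A →ₗ[K] A) (β : V →ₗ[K] V) ρ μ) :
    -- the dual representation `(V*, (β⁻¹)*, ρ' = ρ⋆ − μ⋆, μ' = −μ⋆)`
    ∀ (ρ' μ' : A →ₗ[K] Module.End K (V →ₗ[K] K)) (β' : (V →ₗ[K] K) ≃ₗ[K] (V →ₗ[K] K)),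
      ρ' = starRep (α : A →ₗ[K] A) β ρ - starRep (α : A →ₗ[K] A) β μ →
      μ' = - starRep (α : A →ₗ[K] A) β μ →
      β' = β.symm.dualMap →
      -- its dual representation, transported along the canonical evaluation
      -- isomorphism `V ≃ (V*)*`, is the original representation `(V, β, ρ, μ)`:
      (∀ (x : A) (v : V),
          (starRep (α : A →ₗ[K] A) β' ρ' - starRep (α : A →ₗ[K] A) β' μ') x
              (Module.evalEquiv K V v)
            = Module.evalEquiv K V (ρ x v)) ∧
      (∀ (x : A) (v : V),
          (- starRep (α : A →ₗ[K] A) β' μ') x (Module.evalEquiv K V v)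
            = Module.evalEquiv K V (μ x v)) ∧
      (∀ v : V, β'.symm.dualMap (Module.evalEquiv K V v)
            = Module.evalEquiv K V (β v)) :=
  double_dual_rep_eq_general mul α β ρ μ hrep
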